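/- arXiv:1412.3795 — 7 statements merged into one kernel-verified Lean document; each statement's English description precedes it below -/
import Mathlib

section
/- Every word c in the linear δ-component R_δ satisfies Σ_{α∈L} c_α · l(α) = 0 for every linear functional l : F^m → F with l(δ)=0 and every line L of PG(m-1,q) containing δ. -/
variable {F : Type*} [Field F] [Fintype F] [DecidableEq F] {m : ℕ}

def IsProj (α : Fin m → F) : Prop :=
  ∃ i, α i = 1 ∧ ∀ j < i, α j = 0

instance : DecidablePred (IsProj (F := F) (m := m)) :=
  fun α => decidable_of_iff (∃ i, α i = 1 ∧ ∀ j < i, α j = 0) Iff.rfl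

/-- The projective points: nonzero vectors with first nonzero coordinate 1. -/
abbrev PA (F : Type*) [Field F] [Fintype F] [DecidableEq F] (m : ℕ) : Type _ :=
  {α : Fin m → F // IsProj α}

/-- The Hamming code of length (q^m-1)/(q-1). -/
def Hcode (F : Type*) [Field F] [Fintype F] [DecidableEq F] (m : ℕ) : Set (PA F m → F) :=
  {c | ∑ α : PA F m, c α • (α : Fin m → F) = 0}

/-- Zero-extension of a vector of F^m to a word indexed by PA F m. -/
def bar (α : Fin m → F) : PA F m → F :=
  fun β => ∑ i, if (β : Fin m → F) = Pi.single i 1 then α i else 0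

/-- The linear δ-component: span of the weight-3 codewords with value 1 at δ. -/
def Rcomp (δ : PA F m) : Submodule F (PA F m → F) :=
  Submodule.span F {c | c ∈ Hcode F m ∧ hammingNorm c = 3 ∧ c δ = 1}

/-- A 1-perfect code: radius-1 balls around codewords partition the space. -/
def IsPerfect {ι : Type*} [Fintype ι] (P : Set (ι → F)) : Prop :=
  ∀ z : ι → F, ∃! c, c ∈ P ∧ hammingDist z c ≤ 1

/-- A 1-code: radius-1 balls around codewords are pairwise disjoint. -/
def IsOneCode {ι : Type*} [Fintype ι] (C : Set (ι → F)) : Prop :=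
  ∀ x ∈ C, ∀ y ∈ C, x ≠ y → ∀ z, ¬(hammingDist x z ≤ 1 ∧ hammingDist y z ≤ 1)

/-- The radius-1 neighborhood of a set of words. -/
def nbhd {ι : Type*} [Fintype ι] (M : Set (ι → F)) : Set (ι → F) :=
  {y | ∃ x ∈ M, hammingDist x y ≤ 1}

/-- The projective point corresponding to the standard basis vector π^(i). -/
def singleProj (i : Fin m) : PA F m :=
  ⟨Pi.single i 1, i, by simp, fun j hj => Pi.single_eq_of_ne (Fin.ne_of_lt hj) 1⟩

/-- The projective point (1, x). -/
def consProj {s : ℕ} (x : Fin s → F) : PA F (s+1) :=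
  ⟨Fin.cons 1 x, 0, by simp, fun j hj => absurd hj (by simp)⟩

theorem stmt4 (δ : PA F m) (c : PA F m → F) (hc : c ∈ Rcomp δ)
    (l : (Fin m → F) →ₗ[F] F) (hl : l (δ : Fin m → F) = 0)
    (W : Submodule F (Fin m → F)) (hW : Module.finrank F W = 2)
    (hδW : (δ : Fin m → F) ∈ W) :
    ∑ᶠ α ∈ {α : PA F m | (α : Fin m → F) ∈ W}, c α * l (α : Fin m → F) = 0 := by
  classical
  have key : ∀ x ∈ Rcomp δ,
      ∑ α : PA F m, (if (α : Fin m → F) ∈ W then x α * l (α : Fin m → F) else 0) = 0 := by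
    intro x hx
    induction hx using Submodule.span_induction with
    | mem t ht =>
      obtain ⟨htH, htn, htδ⟩ := ht
      set s : Finset (PA F m) := Finset.univ.filter (fun α => t α ≠ 0) with hs
      have hδs : δ ∈ s := by simp [hs, htδ]
      have hcard : s.card = 3 := htn
      have hsum0 : ∑ γ ∈ s, t γ • (γ : Fin m → F) = 0 := by
        rw [← htH]
        apply Finset.sum_subset (Finset.subset_univ s)
        intro γ _ hγ
        have : t γ = 0 := by simpa [hs] using hγ
        simp [this]
      have hstep : (∑ α : PA F m, (if (α : Fin m → F) ∈ W then t α * l (α : Fin m → F) else 0))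
          = ∑ α ∈ s, (if (α : Fin m → F) ∈ W then t α * l (α : Fin m → F) else 0) := by
        symm
        apply Finset.sum_subset (Finset.subset_univ s)
        intro γ _ hγ
        have : t γ = 0 := by simpa [hs] using hγ
        simp [this]
      rw [hstep]
      by_cases hall : ∀ α ∈ s, (α : Fin m → F) ∈ W
      · have : ∑ α ∈ s, (if (α : Fin m → F) ∈ W then t α * l (α : Fin m → F) else 0)
            = ∑ α ∈ s, t α * l (α : Fin m → F) := by
          apply Finset.sum_congr rfl
          intro α hα
          simp [hall α hα]
        rw [this]
        have : ∑ α ∈ s, t α * l (α : Fin m → F)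
            = l (∑ α ∈ s, t α • (α : Fin m → F)) := by
          rw [map_sum]
          apply Finset.sum_congr rfl
          intro α _
          rw [map_smul, smul_eq_mul]
        rw [this, hsum0, map_zero]
      · push_neg at hall
        obtain ⟨β, hβs, hβW⟩ := hall
        apply Finset.sum_eq_zero
        intro α hα
        split
        · rename_i hαW
          by_cases hαδ : α = δ
          · subst hαδ; simp [htδ, hl]
          · exfalso
            have hβδ : β ≠ δ := fun h => hβW (h ▸ hδW)
            have hβα : β ≠ α := fun h => hβW (h ▸ hαW)
            have hsub : ({δ, α, β} : Finset (PA F m)) ⊆ s := by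
              intro γ hγ
              simp only [Finset.mem_insert, Finset.mem_singleton] at hγ
              rcases hγ with rfl | rfl | rfl <;> assumption
            have hc3 : ({δ, α, β} : Finset (PA F m)).card = 3 := by
              rw [Finset.card_insert_of_notMem, Finset.card_insert_of_notMem,
                Finset.card_singleton]
              · simpa using hβα.symm
              · simp only [Finset.mem_insert, Finset.mem_singleton]
                push_neg
                exact ⟨fun h => hαδ h.symm, hβδ.symm⟩
            have hseq : s = ({δ, α, β} : Finset (PA F m)) :=
              (Finset.eq_of_subset_of_card_le hsub (hc3 ▸ hcard.le)).symm
            have hαδ' : α ∉ ({β} : Finset (PA F m)) := by simpa using hβα.symm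
            have hδ' : δ ∉ ({α, β} : Finset (PA F m)) := by
              simp only [Finset.mem_insert, Finset.mem_singleton]
              push_neg
              exact ⟨fun h => hαδ h.symm, hβδ.symm⟩
            rw [hseq, Finset.sum_insert hδ', Finset.sum_insert hαδ',
              Finset.sum_singleton] at hsum0
            have hexp := hsum0
            have htβ : t β ≠ 0 := by simpa [hs] using hβs
            have hmem : t β • (β : Fin m → F) ∈ W := by
              have : t β • (β : Fin m → F) = -(t δ • (δ : Fin m → F) + t α • (α : Fin m → F)) := by
                linear_combination hexp
              rw [this]
              exact W.neg_mem (W.add_mem (W.smul_mem _ hδW) (W.smul_mem _ hαW))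
            have : (β : Fin m → F) ∈ W := by
              have := W.smul_mem (t β)⁻¹ hmem
              rwa [smul_smul, inv_mul_cancel₀ htβ, one_smul] at this
            exact hβW this
        · rfl
    | zero => simp
    | add x y hx hy ihx ihy =>
      have : (∑ α : PA F m, (if (α : Fin m → F) ∈ W then (x + y) α * l (α : Fin m → F) else 0))
          = (∑ α : PA F m, (if (α : Fin m → F) ∈ W then x α * l (α : Fin m → F) else 0))
          + ∑ α : PA F m, (if (α : Fin m → F) ∈ W then y α * l (α : Fin m → F) else 0) := by
        rw [← Finset.sum_add_distrib]
        apply Finset.sum_congr rfl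
        intro α _
        by_cases h : (α : Fin m → F) ∈ W <;> simp [h, add_mul]
      rw [this, ihx, ihy, add_zero]
    | smul a x hx ih =>
      have : (∑ α : PA F m, (if (α : Fin m → F) ∈ W then (a • x) α * l (α : Fin m → F) else 0))
          = a * ∑ α : PA F m, (if (α : Fin m → F) ∈ W then x α * l (α : Fin m → F) else 0) := by
        rw [Finset.mul_sum]
        apply Finset.sum_congr rfl
        intro α _
        by_cases h : (α : Fin m → F) ∈ W <;> simp [h, mul_assoc]
      rw [this, ih, mul_zero]
  rw [finsum_mem_def, finsum_eq_sum_of_fintype]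
  rw [← key c hc]
  apply Finset.sum_congr rfl
  intro α _
  simp [Set.indicator_apply]
end

section
/- Every element c of the span ⟨R_δ, R_κ⟩ satisfies Σ_{α∈P} c_α · l(α) = 0 for every linear functional l : F^m → F with l(δ)=l(κ)=0 and every plane P of PG(m-1,q) containing both δ and κ. -/
variable {F : Type*} [Field F] [Fintype F] [DecidableEq F] {m : ℕ}

open scoped Classical

lemma gen_sum {F : Type*} [Field F] [Fintype F] [DecidableEq F] {m : ℕ}
    (μ : PA F m) (l : (Fin m → F) →ₗ[F] F) (hlμ : l (μ : Fin m → F) = 0)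
    (W : Submodule F (Fin m → F)) (hμW : (μ : Fin m → F) ∈ W)
    (c : PA F m → F) (hc : c ∈ Hcode F m) (h3 : hammingNorm c = 3) (hcμ : c μ = 1) :
    ∑ α ∈ Finset.univ.filter (fun α : PA F m => (α : Fin m → F) ∈ W),
      c α * l (α : Fin m → F) = 0 := by
  classical
  set S : Finset (PA F m) := Finset.univ.filter (fun α => c α ≠ 0) with hS
  have hcard : S.card = 3 := h3
  have hμS : μ ∈ S := by simp [hS, hcμ]
  -- sum of relation over S
  have hrel : ∑ α ∈ S, c α • (α : Fin m → F) = 0 := by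
    have := hc
    rw [Hcode] at this
    rw [← this]
    apply Finset.sum_subset (Finset.subset_univ S)
    intro x _ hx
    have : c x = 0 := by
      by_contra h
      exact hx (by simp [hS, h])
    simp [this]
  set T : Finset (PA F m) := S.filter (fun α => (α : Fin m → F) ∈ W) with hT
  have hμT : μ ∈ T := by simp [hT, hμS, hμW]
  have hsum : ∑ α ∈ Finset.univ.filter (fun α : PA F m => (α : Fin m → F) ∈ W),
      c α * l (α : Fin m → F) = ∑ α ∈ T, c α * l (α : Fin m → F) := by
    symm
    apply Finset.sum_subset
    · intro x hx
      simp only [hT, Finset.mem_filter] at hx ⊢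
      exact ⟨Finset.mem_univ x, hx.2⟩
    · intro x hx hxT
      simp only [Finset.mem_filter] at hx
      have : c x = 0 := by
        by_contra h
        exact hxT (by simp [hT, hS, h, hx.2])
      simp [this]
  rw [hsum]
  by_cases hTS : T = S
  · -- all support in W: apply l to relation
    rw [hTS]
    calc ∑ α ∈ S, c α * l (α : Fin m → F)
        = l (∑ α ∈ S, c α • (α : Fin m → F)) := by
          rw [map_sum]; exact Finset.sum_congr rfl (fun α _ => (l.map_smul _ _).symm)
      _ = 0 := by rw [hrel, map_zero]
  · -- some support point not in W; show T = {μ}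
    have hTmu : T = {μ} := by
      by_contra hne
      -- there is β ∈ T with β ≠ μ
      obtain ⟨β, hβT, hβμ⟩ : ∃ β ∈ T, β ≠ μ := by
        by_contra h
        push_neg at h
        exact hne (Finset.eq_singleton_iff_unique_mem.2 ⟨hμT, h⟩)
      -- T ⊆ S; get γ ∈ S \ T (since T ≠ S)
      have hTsub : T ⊆ S := Finset.filter_subset _ _
      obtain ⟨γ, hγS, hγT⟩ : ∃ γ ∈ S, γ ∉ T := by
        by_contra h
        push_neg at h
        exact hTS (Finset.Subset.antisymm hTsub h)
      have hγμ : γ ≠ μ := fun h => hγT (h ▸ hμT)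
      have hγβ : γ ≠ β := fun h => hγT (h ▸ hβT)
      have hβS : β ∈ S := hTsub hβT
      -- S = {μ, β, γ}
      have hsub : ({μ, β, γ} : Finset (PA F m)) ⊆ S := by
        intro x hx
        simp only [Finset.mem_insert, Finset.mem_singleton] at hx
        rcases hx with rfl | rfl | rfl
        exacts [hμS, hβS, hγS]
      have hcard3 : ({μ, β, γ} : Finset (PA F m)).card = 3 := by
        rw [Finset.card_insert_of_notMem (by simp [hβμ.symm, hγμ.symm]),
          Finset.card_insert_of_notMem (by simp [hγβ.symm])]
        rfl
      have hSeq : S = {μ, β, γ} :=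
        (Finset.eq_of_subset_of_card_le hsub (by rw [hcard, hcard3])).symm
      -- relation: c μ • μ + c β • β + c γ • γ = 0
      have hrel2 : c μ • (μ : Fin m → F) + c β • (β : Fin m → F)
          + c γ • (γ : Fin m → F) = 0 := by
        rw [hSeq] at hrel
        rw [Finset.sum_insert (by simp [hβμ.symm, hγμ.symm]),
          Finset.sum_insert (by simp [hγβ.symm]), Finset.sum_singleton] at hrel
        linear_combination (norm := module) hrel
      have hβW : (β : Fin m → F) ∈ W := (Finset.mem_filter.1 hβT).2
      have hγW : c γ • (γ : Fin m → F) ∈ W := by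
        have : c γ • (γ : Fin m → F)
            = -(c μ • (μ : Fin m → F) + c β • (β : Fin m → F)) := by
          linear_combination (norm := module) hrel2
        rw [this]
        exact neg_mem (add_mem (W.smul_mem _ hμW) (W.smul_mem _ hβW))
      have hcγ : c γ ≠ 0 := by simpa [hS] using hγS
      have : (γ : Fin m → F) ∈ W := by
        have := W.smul_mem (c γ)⁻¹ hγW
        rwa [smul_smul, inv_mul_cancel₀ hcγ, one_smul] at this
      exact hγT (by simp [hT, hγS, this])
    rw [hTmu, Finset.sum_singleton, hlμ, mul_zero]

theorem stmt5 (δ κ : PA F m) (c : PA F m → F) (hc : c ∈ Rcomp δ ⊔ Rcomp κ)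
    (l : (Fin m → F) →ₗ[F] F) (hlδ : l (δ : Fin m → F) = 0) (hlκ : l (κ : Fin m → F) = 0)
    (W : Submodule F (Fin m → F)) (hW : Module.finrank F W = 3)
    (hδW : (δ : Fin m → F) ∈ W) (hκW : (κ : Fin m → F) ∈ W) :
    ∑ᶠ α ∈ {α : PA F m | (α : Fin m → F) ∈ W}, c α * l (α : Fin m → F) = 0 := by
  classical
  have hset : {α : PA F m | (α : Fin m → F) ∈ W}
      = ↑(Finset.univ.filter (fun α : PA F m => (α : Fin m → F) ∈ W)) := by
    ext x; simp
  rw [hset, finsum_mem_coe_finset]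
  -- linear map L
  let L : (PA F m → F) →ₗ[F] F :=
    { toFun := fun c => ∑ α ∈ Finset.univ.filter (fun α : PA F m => (α : Fin m → F) ∈ W),
        c α * l (α : Fin m → F)
      map_add' := by
        intro x y
        simp [add_mul, Finset.sum_add_distrib]
      map_smul' := by
        intro r x
        simp [Finset.mul_sum, mul_assoc] }
  have hker : Rcomp δ ⊔ Rcomp κ ≤ LinearMap.ker L := by
    apply sup_le
    · rw [Rcomp, Submodule.span_le]
      rintro x ⟨hx1, hx2, hx3⟩
      exact gen_sum δ l hlδ W hδW x hx1 hx2 hx3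
    · rw [Rcomp, Submodule.span_le]
      rintro x ⟨hx1, hx2, hx3⟩
      exact gen_sum κ l hlκ W hκW x hx1 hx2 hx3
  exact hker hc
end

section
/- For every z ∈ F^n and every μ ∈ F, the radius-1 neighborhood of the coset R_δ + z equals the radius-1 neighborhood of R_δ + z + μ·e^{(δ)}, where e^{(δ)} is the standard basis vector of F^n with a 1 at coordinate δ. -/
variable {F : Type*} [Field F] [Fintype F] [DecidableEq F] {m : ℕ}

/-!
A word of the neighborhood of `R_δ + z` has the form `x + z + a e_γ` with `x ∈ R_δ`, and adding
`μ e_δ` keeps it there. The only nontrivial case is `γ ≠ δ`, `μ ≠ 0`, `a ≠ 0`: if `β` is the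
projective point proportional to `δ + (a/μ) γ = s β`, then `e_δ + (a/μ) e_γ - s e_β` is a weight-3
word of the Hamming code with value 1 at `δ`, and `μ e_δ + a e_γ` differs from `μ` times it by a
single error at `β`. Translating by `-μ e_δ` gives the reverse inclusion.
-/

section Hamming

variable {ι R : Type*} [Fintype ι] [DecidableEq ι] [Zero R] [DecidableEq R]

lemma hammingNorm_single_le_one (i : ι) (a : R) : hammingNorm (Pi.single i a : ι → R) ≤ 1 := by
  have hsupp : ∀ j, (Pi.single i a : ι → R) j ≠ 0 → j = i :=
    fun j hj => by_contra fun h => hj (by simp [h])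
  refine Finset.card_le_one.2 fun j hj k hk => ?_
  simp only [Finset.mem_filter, Finset.mem_univ, true_and] at hj hk
  exact (hsupp j hj).trans (hsupp k hk).symm

lemma exists_eq_single_of_hammingNorm_le_one [Nonempty ι] {u : ι → R}
    (h : hammingNorm u ≤ 1) : ∃ i a, u = Pi.single i a := by
  rcases eq_or_ne u 0 with rfl | hu
  · exact ⟨Classical.arbitrary ι, 0, Pi.single_zero _ |>.symm⟩
  obtain ⟨i, hi⟩ := Finset.card_eq_one.1 <|
    le_antisymm h (Nat.one_le_iff_ne_zero.2 (hammingNorm_ne_zero_iff.2 hu))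
  refine ⟨i, u i, funext fun j => ?_⟩
  rcases eq_or_ne j i with rfl | hji
  · simp
  · have : j ∉ ({i | u i ≠ 0} : Finset ι) := by simpa [hi] using hji
    simpa [hji] using this

end Hamming

section Neighborhood

omit [Fintype F]

variable {ι : Type*} [Fintype ι] [DecidableEq ι] {M : Set (ι → F)}

lemma add_single_mem_nbhd {x : ι → F} (hx : x ∈ M) (i : ι) (a : F) :
    x + Pi.single i a ∈ nbhd M :=
  ⟨x, hx, by simpa [hammingDist_eq_hammingNorm] using hammingNorm_single_le_one i a⟩

lemma exists_add_single_of_mem_nbhd [Nonempty ι] {y : ι → F} (hy : y ∈ nbhd M) :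
    ∃ x ∈ M, ∃ i a, y = x + Pi.single i a := by
  obtain ⟨x, hx, hxy⟩ := hy
  rw [hammingDist_eq_hammingNorm] at hxy
  obtain ⟨i, a, hia⟩ := exists_eq_single_of_hammingNorm_le_one hxy
  exact ⟨x, hx, i, a, by rw [← hia, add_neg_cancel_left]⟩

end Neighborhood

lemma PA.eq_of_val_eq_smul {α β : PA F m} {c : F}
    (h : (α : Fin m → F) = c • (β : Fin m → F)) : α = β := by
  obtain ⟨i, hi1, hi0⟩ := β.2
  obtain ⟨j, hj1, hj0⟩ := α.2
  have hcoord : ∀ k, (α : Fin m → F) k = c * (β : Fin m → F) k := fun k => congrFun h k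
  have hji : j = i := by
    rcases lt_trichotomy j i with hlt | heq | hgt
    · simpa [hj1, hi0 j hlt] using hcoord j
    · exact heq
    · have hc : c = 0 := by simpa [hj0 i hgt, hi1] using (hcoord i).symm
      simpa [hj1, hc] using hcoord j
  have hc : c = 1 := by simpa [hj1, hji ▸ hi1] using (hcoord j).symm
  exact Subtype.ext (by rw [h, hc, one_smul])

lemma PA.exists_eq_smul {v : Fin m → F} (hv : v ≠ 0) :
    ∃ s : F, s ≠ 0 ∧ ∃ β : PA F m, v = s • (β : Fin m → F) := by
  obtain ⟨i, hi, hmin⟩ := wellFounded_lt.has_min {i | v i ≠ 0} (Function.ne_iff.1 hv)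
  have hlead : ∀ j < i, v j = 0 := fun j hj => not_not.1 fun h => hmin j h hj
  refine ⟨v i, hi, ⟨(v i)⁻¹ • v, i, by simp [inv_mul_cancel₀ hi], fun j hj => by
    simp [hlead j hj]⟩, ?_⟩
  rw [smul_smul, mul_inv_cancel₀ hi, one_smul]

lemma PA.exists_third_point {δ γ : PA F m} (hne : δ ≠ γ) {t : F} (ht : t ≠ 0) :
    ∃ β : PA F m, β ≠ δ ∧ β ≠ γ ∧ ∃ s : F, s ≠ 0 ∧ (δ : Fin m → F) + t • γ = s • β := by
  have hv : (δ : Fin m → F) + t • γ ≠ 0 := fun h =>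
    hne (PA.eq_of_val_eq_smul (c := -t) (by rw [neg_smul]; exact eq_neg_of_add_eq_zero_left h))
  obtain ⟨s, hs, β, hβ⟩ := PA.exists_eq_smul hv
  refine ⟨β, ?_, ?_, s, hs, hβ⟩
  · rintro rfl
    exact hne (PA.eq_of_val_eq_smul (c := t⁻¹ * (s - 1)) (by
      rw [mul_smul, sub_smul, one_smul, ← hβ, add_sub_cancel_left, smul_smul,
        inv_mul_cancel₀ ht, one_smul])).symm
  · rintro rfl
    exact hne (PA.eq_of_val_eq_smul (c := s - t) (by rw [sub_smul, ← hβ, add_sub_cancel_right]))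

lemma mem_Hcode_iff {c : PA F m → F} :
    c ∈ Hcode F m ↔ Fintype.linearCombination F (fun α : PA F m => (α : Fin m → F)) c = 0 := by
  rw [Fintype.linearCombination_apply]
  rfl

lemma exists_single_add_single_add_single_mem_Rcomp {δ γ : PA F m} (hne : δ ≠ γ) {t : F}
    (ht : t ≠ 0) : ∃ β b, Pi.single δ 1 + Pi.single γ t + Pi.single β b ∈ Rcomp δ := by
  obtain ⟨β, hβδ, hβγ, s, hs, hδγ⟩ := PA.exists_third_point hne ht
  refine ⟨β, -s, Submodule.subset_span ⟨?_, ?_, by simp [hne.symm, hβδ]⟩⟩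
  · simp [mem_Hcode_iff, Fintype.linearCombination_apply_single, hδγ]
  · have hsupp : ({α | (Pi.single δ 1 + Pi.single γ t + Pi.single β (-s) : PA F m → F) α ≠ 0} :
        Finset (PA F m)) = {δ, γ, β} := by
      ext α
      by_cases hαδ : α = δ
      · subst hαδ; simp [hne, hβδ.symm]
      by_cases hαγ : α = γ
      · subst hαγ; simp [hne.symm, hβγ.symm, ht]
      by_cases hαβ : α = β
      · subst hαβ; simp [hβδ, hβγ, hs]
      simp [hαδ, hαγ, hαβ]
    rw [hammingNorm, hsupp, Finset.card_insert_of_notMem (by simp [hne, hβδ.symm]),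
      Finset.card_pair hβγ.symm]

lemma exists_mem_Rcomp_single_add_single_eq (δ γ : PA F m) (μ a : F) :
    ∃ r ∈ Rcomp δ, ∃ β b, Pi.single δ μ + Pi.single γ a = r + Pi.single β b := by
  by_cases hγ : γ = δ
  · exact ⟨0, zero_mem _, δ, μ + a, by simp [hγ, Pi.single_add]⟩
  by_cases hμ : μ = 0
  · exact ⟨0, zero_mem _, γ, a, by simp [hμ]⟩
  by_cases ha : a = 0
  · exact ⟨0, zero_mem _, δ, μ, by simp [ha]⟩
  obtain ⟨β, b, hw⟩ := exists_single_add_single_add_single_mem_Rcomp (Ne.symm hγ)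
    (mul_ne_zero (inv_ne_zero hμ) ha)
  refine ⟨μ • _, Submodule.smul_mem _ μ hw, β, -(μ * b), ?_⟩
  simp only [smul_add, ← Pi.single_smul, smul_eq_mul, mul_one, mul_inv_cancel_left₀ hμ,
    Pi.single_neg]
  abel

lemma nbhd_coset_add_single_subset (δ : PA F m) (z : PA F m → F) (μ : F) :
    nbhd ((· + (z + Pi.single δ μ)) '' (Rcomp δ : Set (PA F m → F))) ⊆
      nbhd ((· + z) '' (Rcomp δ : Set (PA F m → F))) := by
  have : Nonempty (PA F m) := ⟨δ⟩
  intro y hy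
  obtain ⟨_, ⟨x, hx, rfl⟩, γ, a, rfl⟩ := exists_add_single_of_mem_nbhd hy
  obtain ⟨r, hr, β, b, hrb⟩ := exists_mem_Rcomp_single_add_single_eq δ γ μ a
  have hy : x + (z + Pi.single δ μ) + Pi.single γ a = x + r + z + Pi.single β b := by
    rw [add_assoc, add_assoc, hrb]
    abel
  rw [hy]
  exact add_single_mem_nbhd (Set.mem_image_of_mem (· + z) (add_mem hx hr)) β b

theorem stmt6 (δ : PA F m) (z : PA F m → F) (μ : F) :
    nbhd ((· + z) '' (Rcomp δ : Set (PA F m → F))) =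
      nbhd ((· + (z + Pi.single δ μ)) '' (Rcomp δ : Set (PA F m → F))) := by
  refine (nbhd_coset_add_single_subset δ z μ).antisymm' ?_
  have h := nbhd_coset_add_single_subset δ (z + Pi.single δ μ) (-μ)
  rwa [add_assoc, ← Pi.single_add, add_neg_cancel, Pi.single_zero, add_zero] at h
end

section
/- Assume δ, κ ∈ A both start with 1 and d(δ,κ) ≥ 3. Then the δ-component R_δ + δ̄ − e^{(δ)} and the κ-component R_κ + κ̄ − e^{(κ)} are disjoint subsets of F^n; equivalently, the word (δ̄ − e^{(δ)}) − (κ̄ − e^{(κ)}) does not belong to the span ⟨R_δ, R_κ⟩. -/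
variable {F : Type*} [Field F] [Fintype F] [DecidableEq F] {m : ℕ}

open Classical in
/-- The restriction of a linear functional to a subspace, extended by zero. -/
private noncomputable def uu (W : Submodule F (Fin m → F)) (ψ : (Fin m → F) →ₗ[F] F)
    (x : Fin m → F) : F := if x ∈ W then ψ x else 0

private lemma uu_mem {W : Submodule F (Fin m → F)} {ψ : (Fin m → F) →ₗ[F] F}
    {x : Fin m → F} (h : x ∈ W) : uu W ψ x = ψ x := by simp [uu, h]

private lemma uu_not_mem {W : Submodule F (Fin m → F)} {ψ : (Fin m → F) →ₗ[F] F}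
    {x : Fin m → F} (h : x ∉ W) : uu W ψ x = 0 := by simp [uu, h]

private lemma sum_triple {M : Type*} [AddCommMonoid M] {c : PA F m → F}
    {δ α β : PA F m} (hδα : δ ≠ α) (hδβ : δ ≠ β) (hαβ : α ≠ β)
    (hS : (Finset.univ.filter fun γ => c γ ≠ 0) = {δ, α, β})
    (g : PA F m → M) (hg : ∀ γ, c γ = 0 → g γ = 0) :
    ∑ γ : PA F m, g γ = g δ + g α + g β := by
  rw [← Finset.sum_subset (Finset.subset_univ ({δ, α, β} : Finset (PA F m)))
      (fun γ _ hγ => by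
        apply hg
        by_contra h
        exact hγ (hS ▸ Finset.mem_filter.mpr ⟨Finset.mem_univ _, h⟩))]
  rw [Finset.sum_insert (by simp [hδα, hδβ]), Finset.sum_insert (by simp [hαβ]),
    Finset.sum_singleton, add_assoc]

private lemma key_step (W : Submodule F (Fin m → F)) (ψ : (Fin m → F) →ₗ[F] F)
    (δ α β : PA F m) (hδW : (δ : Fin m → F) ∈ W) (hψδ : ψ (δ : Fin m → F) = 0)
    {c : PA F m → F}
    (hδα : δ ≠ α) (hδβ : δ ≠ β) (hαβ : α ≠ β)
    (hS : (Finset.univ.filter fun γ => c γ ≠ 0) = {δ, α, β})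
    (hc : c ∈ Hcode F m) :
    ∑ γ : PA F m, c γ * uu W ψ (γ : Fin m → F) = 0 := by
  have hcα : c α ≠ 0 := by
    have : α ∈ Finset.univ.filter fun γ => c γ ≠ 0 := by rw [hS]; simp
    exact (Finset.mem_filter.mp this).2
  have hcβ : c β ≠ 0 := by
    have : β ∈ Finset.univ.filter fun γ => c γ ≠ 0 := by rw [hS]; simp
    exact (Finset.mem_filter.mp this).2
  have h1 : c δ • (δ : Fin m → F) + c α • (α : Fin m → F) + c β • (β : Fin m → F) = 0 := by
    rw [← sum_triple hδα hδβ hαβ hS (fun γ => c γ • (γ : Fin m → F))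
      (fun γ h => by show c γ • (γ : Fin m → F) = 0; rw [h, zero_smul])]
    exact hc
  rw [sum_triple hδα hδβ hαβ hS (fun γ => c γ * uu W ψ (γ : Fin m → F))
    (fun γ h => by show c γ * uu W ψ (γ : Fin m → F) = 0; rw [h, zero_mul])]
  by_cases hα : (α : Fin m → F) ∈ W
  · have hβ : (β : Fin m → F) ∈ W := by
      have hmem : c β • (β : Fin m → F) ∈ W := by
        have h2 : c β • (β : Fin m → F)
            = -(c δ • (δ : Fin m → F) + c α • (α : Fin m → F)) := by
          rw [eq_neg_iff_add_eq_zero, ← h1]; abel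
        rw [h2]
        exact W.neg_mem (W.add_mem (W.smul_mem _ hδW) (W.smul_mem _ hα))
      have := W.smul_mem (c β)⁻¹ hmem
      rwa [smul_smul, inv_mul_cancel₀ hcβ, one_smul] at this
    rw [uu_mem hδW, uu_mem hα, uu_mem hβ]
    have h2 : ψ (c δ • (δ : Fin m → F) + c α • (α : Fin m → F) + c β • (β : Fin m → F)) = 0 := by
      rw [h1]; exact map_zero ψ
    simpa [map_add, map_smul, smul_eq_mul] using h2
  · have hβ : (β : Fin m → F) ∉ W := by
      intro hβ
      apply hα
      have hmem : c α • (α : Fin m → F) ∈ W := by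
        have h2 : c α • (α : Fin m → F)
            = -(c δ • (δ : Fin m → F) + c β • (β : Fin m → F)) := by
          rw [eq_neg_iff_add_eq_zero, ← h1]; abel
        rw [h2]
        exact W.neg_mem (W.add_mem (W.smul_mem _ hδW) (W.smul_mem _ hβ))
      have := W.smul_mem (c α)⁻¹ hmem
      rwa [smul_smul, inv_mul_cancel₀ hcα, one_smul] at this
    rw [uu_mem hδW, hψδ, uu_not_mem hα, uu_not_mem hβ]
    ring

set_option maxHeartbeats 1000000 in
private lemma key_ann (W : Submodule F (Fin m → F)) (ψ : (Fin m → F) →ₗ[F] F)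
    (δ : PA F m) (hδW : (δ : Fin m → F) ∈ W) (hψδ : ψ (δ : Fin m → F) = 0)
    {c : PA F m → F} (hc : c ∈ Hcode F m) (hn : hammingNorm c = 3) (h1 : c δ = 1) :
    ∑ γ : PA F m, c γ * uu W ψ (γ : Fin m → F) = 0 := by
  have hδ0 : c δ ≠ 0 := by rw [h1]; exact one_ne_zero
  have hcard : (Finset.univ.filter fun γ => c γ ≠ 0).card = 3 := by
    rw [← hn]; rfl
  obtain ⟨x, y, z, hxy, hxz, hyz, hS⟩ := Finset.card_eq_three.mp hcard
  have hδmem : δ ∈ ({x, y, z} : Finset (PA F m)) := by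
    rw [← hS]; exact Finset.mem_filter.mpr ⟨Finset.mem_univ _, hδ0⟩
  simp only [Finset.mem_insert, Finset.mem_singleton] at hδmem
  rcases hδmem with rfl | rfl | rfl
  · exact key_step W ψ δ y z hδW hψδ hxy hxz hyz hS hc
  · exact key_step W ψ δ x z hδW hψδ (Ne.symm hxy) hyz hxz
      (hS.trans (by ext γ; simp; tauto)) hc
  · exact key_step W ψ δ x y hδW hψδ (Ne.symm hxz) (Ne.symm hyz) hxy
      (hS.trans (by ext γ; simp; tauto)) hc

theorem stmt9 [NeZero m] (δ κ : PA F m)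
    (hδ : (δ : Fin m → F) 0 = 1) (hκ : (κ : Fin m → F) 0 = 1)
    (hd : 3 ≤ hammingDist (δ : Fin m → F) (κ : Fin m → F)) :
    Disjoint
      ((· + (bar (δ : Fin m → F) - Pi.single δ 1)) '' (Rcomp δ : Set (PA F m → F)))
      ((· + (bar (κ : Fin m → F) - Pi.single κ 1)) '' (Rcomp κ : Set (PA F m → F))) ∧
    (bar (δ : Fin m → F) - Pi.single δ 1) - (bar (κ : Fin m → F) - Pi.single κ 1) ∉
      (Rcomp δ ⊔ Rcomp κ : Submodule F (PA F m → F)) := by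
  classical
  -- three distinct coordinates where δ and κ differ
  have hDcard : 3 ≤ (Finset.univ.filter fun i =>
      (δ : Fin m → F) i ≠ (κ : Fin m → F) i).card := hd
  obtain ⟨T, hTD, hT3⟩ := Finset.exists_subset_card_eq hDcard
  obtain ⟨i0, i1, i2, h01, h02, h12, hT⟩ := Finset.card_eq_three.mp hT3
  have hmemT : ∀ i ∈ T, (δ : Fin m → F) i ≠ (κ : Fin m → F) i := by
    intro i hi
    exact (Finset.mem_filter.mp (hTD hi)).2
  have hi0 : (δ : Fin m → F) i0 ≠ (κ : Fin m → F) i0 := hmemT i0 (by rw [hT]; simp)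
  have hi1 : (δ : Fin m → F) i1 ≠ (κ : Fin m → F) i1 := hmemT i1 (by rw [hT]; simp)
  have hi2 : (δ : Fin m → F) i2 ≠ (κ : Fin m → F) i2 := hmemT i2 (by rw [hT]; simp)
  have hi00 : i0 ≠ 0 := fun h => hi0 (by rw [h, hδ, hκ])
  have hi10 : i1 ≠ 0 := fun h => hi1 (by rw [h, hδ, hκ])
  have hne1 : (δ : Fin m → F) i1 - (κ : Fin m → F) i1 ≠ 0 := sub_ne_zero.mpr hi1
  -- the linear functional ψ
  set b : F := -(((δ : Fin m → F) i0 - (κ : Fin m → F) i0)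
      * ((δ : Fin m → F) i1 - (κ : Fin m → F) i1)⁻¹) with hb
  set a : F := -((δ : Fin m → F) i0) - b * (δ : Fin m → F) i1 with ha
  set ψ : (Fin m → F) →ₗ[F] F :=
    (LinearMap.proj i0 : (Fin m → F) →ₗ[F] F) + a • LinearMap.proj 0 + b • LinearMap.proj i1
    with hψdef
  have hψx : ∀ x : Fin m → F, ψ x = x i0 + a * x 0 + b * x i1 := fun x => rfl
  have hψδ : ψ (δ : Fin m → F) = 0 := by rw [hψx, hδ, ha]; ring
  have hψκ : ψ (κ : Fin m → F) = 0 := by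
    rw [hψx, hκ, ha, hb]
    field_simp
    ring
  have hψe : ψ (Pi.single i0 1) = 1 := by
    rw [hψx, Pi.single_eq_same, Pi.single_eq_of_ne (Ne.symm hi00),
      Pi.single_eq_of_ne (Ne.symm h01)]
    ring
  -- the subspace W
  set W := Submodule.span F ({(δ : Fin m → F), (κ : Fin m → F), Pi.single i0 1} :
    Set (Fin m → F)) with hW
  have hδW : (δ : Fin m → F) ∈ W := Submodule.subset_span (by simp)
  have hκW : (κ : Fin m → F) ∈ W := Submodule.subset_span (by simp)
  have heW : (Pi.single i0 1 : Fin m → F) ∈ W := Submodule.subset_span (by simp)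
  -- other differing basis vectors are not in W
  have hnotW : ∀ i : Fin m, (δ : Fin m → F) i ≠ (κ : Fin m → F) i → i ≠ i0 →
      (Pi.single i 1 : Fin m → F) ∉ W := by
    intro i hi hii0 hmem
    have hI0 : i ≠ 0 := fun h => hi (by rw [h, hδ, hκ])
    obtain ⟨j, hj, hji, hji0⟩ : ∃ j : Fin m,
        ((δ : Fin m → F) j ≠ (κ : Fin m → F) j) ∧ j ≠ i ∧ j ≠ i0 := by
      by_cases h : i = i1
      · exact ⟨i2, hi2, fun hc => h12 (by rw [← h, hc]), Ne.symm h02⟩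
      · exact ⟨i1, hi1, fun hc => h (hc.symm), Ne.symm h01⟩
    rw [hW, Submodule.mem_span_insert] at hmem
    obtain ⟨s, z, hz, hzeq⟩ := hmem
    rw [Submodule.mem_span_insert] at hz
    obtain ⟨t, z', hz', hz'eq⟩ := hz
    rw [Submodule.mem_span_singleton] at hz'
    obtain ⟨r, hr⟩ := hz'
    rw [hz'eq, ← hr] at hzeq
    have hval : ∀ p : Fin m, (Pi.single i 1 : Fin m → F) p
        = s * (δ : Fin m → F) p + (t * (κ : Fin m → F) p
          + r * (Pi.single i0 1 : Fin m → F) p) := by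
      intro p
      have := congrFun hzeq p
      simpa [Pi.add_apply, Pi.smul_apply, smul_eq_mul] using this
    have h0 : (0 : F) = s + t := by
      have h := hval 0
      rw [Pi.single_eq_of_ne (Ne.symm hI0), Pi.single_eq_of_ne (Ne.symm hi00), hδ, hκ] at h
      linear_combination h
    have hs : s = 0 := by
      have h := hval j
      rw [Pi.single_eq_of_ne hji, Pi.single_eq_of_ne hji0] at h
      have h2 : s * ((δ : Fin m → F) j - (κ : Fin m → F) j) = 0 := by
        linear_combination -h + (κ : Fin m → F) j * h0
      rcases mul_eq_zero.mp h2 with h3 | h3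
      · exact h3
      · exact absurd (sub_eq_zero.mp h3) hj
    have ht : t = 0 := by linear_combination -h0 - hs
    have h := hval i
    rw [hs, ht, Pi.single_eq_same, Pi.single_eq_of_ne hii0] at h
    simp at h
  -- the linear functional L on words
  set L : (PA F m → F) →ₗ[F] F :=
    { toFun := fun c => ∑ γ : PA F m, c γ * uu W ψ (γ : Fin m → F)
      map_add' := fun x y => by
        simp [add_mul, Finset.sum_add_distrib]
      map_smul' := fun r x => by
        simp [Finset.mul_sum, mul_assoc] } with hL
  have hker : (Rcomp δ ⊔ Rcomp κ : Submodule F (PA F m → F)) ≤ LinearMap.ker L := by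
    refine sup_le ?_ ?_
    · rw [Rcomp]
      apply Submodule.span_le.mpr
      rintro c ⟨hc, hn3, h1⟩
      exact LinearMap.mem_ker.mpr (key_ann W ψ δ hδW hψδ hc hn3 h1)
    · rw [Rcomp]
      apply Submodule.span_le.mpr
      rintro c ⟨hc, hn3, h1⟩
      exact LinearMap.mem_ker.mpr (key_ann W ψ κ hκW hψκ hc hn3 h1)
  -- computing L on the special words
  have hLsingle : ∀ p : PA F m, L (Pi.single p 1) = uu W ψ (p : Fin m → F) := by
    intro p
    show ∑ γ : PA F m, (Pi.single p 1 : PA F m → F) γ * uu W ψ (γ : Fin m → F) = _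
    rw [Finset.sum_eq_single p]
    · rw [Pi.single_eq_same, one_mul]
    · intro γ _ hγ
      rw [Pi.single_eq_of_ne hγ, zero_mul]
    · intro h; exact absurd (Finset.mem_univ p) h
  have hLbar : ∀ v : Fin m → F,
      L (bar v) = ∑ i, v i * uu W ψ (Pi.single i 1) := by
    intro v
    show ∑ γ : PA F m, bar v γ * uu W ψ (γ : Fin m → F) = _
    simp only [bar, Finset.sum_mul, ite_mul, zero_mul]
    rw [Finset.sum_comm]
    refine Finset.sum_congr rfl fun i _ => ?_
    rw [Finset.sum_eq_single (singleProj i)]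
    · simp [singleProj]
    · intro γ _ hγ
      have hne : ¬ ((γ : Fin m → F) = Pi.single i 1) := fun h => hγ (Subtype.ext h)
      rw [if_neg hne]
    · intro h; exact absurd (Finset.mem_univ _) h
  set w := (bar (δ : Fin m → F) - Pi.single δ 1) - (bar (κ : Fin m → F) - Pi.single κ 1)
    with hw
  have hLw : L w = (δ : Fin m → F) i0 - (κ : Fin m → F) i0 := by
    have hstep : L w = (∑ i, (δ : Fin m → F) i * uu W ψ (Pi.single i 1))
        - uu W ψ (δ : Fin m → F)
        - ((∑ i, (κ : Fin m → F) i * uu W ψ (Pi.single i 1)) - uu W ψ (κ : Fin m → F)) := by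
      rw [hw, map_sub, map_sub, map_sub, hLbar, hLbar, hLsingle, hLsingle]
    rw [hstep, uu_mem hδW, uu_mem hκW, hψδ, hψκ, sub_zero, sub_zero,
      ← Finset.sum_sub_distrib]
    rw [Finset.sum_eq_single i0]
    · rw [uu_mem heW, hψe]; ring
    · intro i _ hii0
      by_cases hi : (δ : Fin m → F) i = (κ : Fin m → F) i
      · rw [hi]; ring
      · rw [uu_not_mem (hnotW i hi hii0)]; ring
    · intro h; exact absurd (Finset.mem_univ _) h
  have hLw0 : L w ≠ 0 := by rw [hLw]; exact sub_ne_zero.mpr hi0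
  have hnotmem : w ∉ (Rcomp δ ⊔ Rcomp κ : Submodule F (PA F m → F)) := by
    intro hmem
    exact hLw0 (LinearMap.mem_ker.mp (hker hmem))
  refine ⟨?_, hnotmem⟩
  rw [Set.disjoint_left]
  rintro x ⟨r, hr, rfl⟩ ⟨s, hs, hx⟩
  apply hnotmem
  have hws : w = s - r := by
    rw [hw]
    linear_combination -hx
  rw [hws]
  exact Submodule.sub_mem _ (le_sup_right (α := Submodule F (PA F m → F)) hs)
    (le_sup_left (α := Submodule F (PA F m → F)) hr)
end

section
/- If x ∈ F^{m-1} satisfies (1, x, 0^{n-m}) ∈ R_δ + δ̄ for some δ ∈ A with first coordinate 1, then (1,x) = δ. -/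
variable {F : Type*} [Field F] [Fintype F] [DecidableEq F] {m : ℕ}

/-- The syndrome map. -/
def Lmap (F : Type*) [Field F] [Fintype F] [DecidableEq F] (m : ℕ) :
    (PA F m → F) →ₗ[F] (Fin m → F) where
  toFun c := ∑ α : PA F m, c α • (α : Fin m → F)
  map_add' a b := by simp [add_smul, Finset.sum_add_distrib]
  map_smul' r a := by simp [smul_smul, Finset.smul_sum]

lemma Lmap_bar (v : Fin m → F) : Lmap F m (bar v) = v := by
  have key : ∀ i : Fin m,
      (∑ α : PA F m, (if (α : Fin m → F) = Pi.single i 1 then v i else 0) • (α : Fin m → F))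
        = v i • (Pi.single i 1 : Fin m → F) := by
    intro i
    rw [Finset.sum_eq_single (singleProj i)]
    · simp [singleProj]
    · intro α _ hne
      have : (α : Fin m → F) ≠ Pi.single i 1 := by
        intro hv
        exact hne (Subtype.ext hv)
      simp [this]
    · simp
  have : Lmap F m (bar v) = ∑ i : Fin m, v i • (Pi.single i 1 : Fin m → F) := by
    simp only [Lmap, LinearMap.coe_mk, AddHom.coe_mk, bar, Finset.sum_smul]
    rw [Finset.sum_comm]
    exact Finset.sum_congr rfl fun i _ => key i
  rw [this]
  funext j
  simp [Pi.single_apply, mul_ite]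

lemma Lmap_Rcomp {δ : PA F m} {c : PA F m → F} (hc : c ∈ Rcomp δ) : Lmap F m c = 0 := by
  have hle : Rcomp δ ≤ LinearMap.ker (Lmap F m) := by
    rw [Rcomp, Submodule.span_le]
    intro w hw
    exact LinearMap.mem_ker.mpr hw.1
  exact LinearMap.mem_ker.mp (hle hc)

theorem stmt13 {s : ℕ} (x : Fin s → F) (δ : PA F (s+1)) (hδ : (δ : Fin (s+1) → F) 0 = 1)
    (h : bar (Fin.cons 1 x) ∈
      (· + bar (δ : Fin (s+1) → F)) '' (Rcomp δ : Set (PA F (s+1) → F))) :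
    Fin.cons 1 x = (δ : Fin (s+1) → F) := by
  obtain ⟨r, hr, heq⟩ := h
  have := congrArg (Lmap F (s+1)) heq
  rw [map_add, Lmap_bar, Lmap_Rcomp hr, zero_add, Lmap_bar] at this
  exact this.symm
end

section
/- For q ≥ 4, there exist δ, κ ∈ A not both starting with 1 such that the corresponding components of the Hamming code intersect: with δ = (1,1,1) and γ = (1,t,t), κ = tγ where t² ∉ {1,t}, the word c̄ = (δ̄ − e^{(δ)}) − (κ̄ − t·e^{(γ)}) belongs to the Hamming code H_3 and satisfies the plane relation (for-comp2) for the plane spanned by δ and γ. -/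
variable {F : Type*} [Field F] [Fintype F] [DecidableEq F] {m : ℕ}

/-- δ = (1,1,1) as a projective point. -/
def deltaA : PA F 3 := ⟨![1,1,1], 0, by simp, by simp⟩

/-- γ = (1,t,t) as a projective point. -/
def gammaA (t : F) : PA F 3 := ⟨![1,t,t], 0, by simp, by simp⟩

/-- The word c̄ = (δ̄ − e^{(δ)}) − (κ̄ − t·e^{(γ)}) with κ = t·γ. -/
def cword (t : F) : PA F 3 → F :=
  (bar (![1,1,1] : Fin 3 → F) - (Pi.single (deltaA (F := F)) (1 : F) : PA F 3 → F))
    - (bar (t • (![1,t,t] : Fin 3 → F)) - t • (Pi.single (gammaA t) (1 : F) : PA F 3 → F))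

lemma cword_eq (t : F) : cword t =
    (Pi.single (singleProj 0) (1 - t) : PA F 3 → F)
      + (Pi.single (singleProj 1) (1 - t ^ 2) : PA F 3 → F)
      + (Pi.single (singleProj 2) (1 - t ^ 2) : PA F 3 → F)
      - (Pi.single deltaA 1 : PA F 3 → F) + (Pi.single (gammaA t) t : PA F 3 → F) := by
  funext β
  simp only [cword, bar, Pi.sub_apply, Pi.add_apply, Pi.smul_apply, smul_eq_mul,
    Pi.single_apply, Fin.sum_univ_three, Subtype.ext_iff, singleProj, deltaA, gammaA,
    Matrix.cons_val_zero, Matrix.cons_val_one, Matrix.head_cons, Matrix.cons_val_two,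
    Matrix.tail_cons]
  split_ifs <;> ring

lemma sum_single_smul (p : PA F m) (c : F) :
    ∑ α : PA F m, (Pi.single p c : PA F m → F) α • (α : Fin m → F) = c • (p : Fin m → F) := by
  rw [Fintype.sum_eq_single p]
  · simp
  · intro α h
    simp [Pi.single_eq_of_ne h]

lemma cword_sum (t : F) :
    ∑ α : PA F 3, cword t α • (α : Fin 3 → F) = 0 := by
  have h : ∑ α : PA F 3, cword t α • (α : Fin 3 → F)
      = (1 - t) • ((singleProj 0 : PA F 3) : Fin 3 → F)
        + (1 - t ^ 2) • ((singleProj 1 : PA F 3) : Fin 3 → F)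
        + (1 - t ^ 2) • ((singleProj 2 : PA F 3) : Fin 3 → F)
        - (1 : F) • ((deltaA : PA F 3) : Fin 3 → F)
        + t • ((gammaA t : PA F 3) : Fin 3 → F) := by
    simp only [cword_eq, Pi.add_apply, Pi.sub_apply, add_smul, sub_smul,
      Finset.sum_add_distrib, Finset.sum_sub_distrib, sum_single_smul]
  rw [h]
  funext j
  fin_cases j <;>
    simp [singleProj, deltaA, gammaA, Pi.single_apply, Matrix.vecHead, Matrix.vecTail] <;> ring

theorem stmt16 (t : F) (ht1 : t ^ 2 ≠ 1) (htt : t ^ 2 ≠ t) :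
    cword t ∈ Hcode F 3 ∧
    ∀ l : (Fin 3 → F) →ₗ[F] F, l (![1,1,1] : Fin 3 → F) = 0 → l (![1,t,t] : Fin 3 → F) = 0 →
      ∑ α : PA F 3, cword t α * l (α : Fin 3 → F) = 0 := by
  refine ⟨cword_sum t, fun l _ _ => ?_⟩
  have : ∑ α : PA F 3, cword t α * l (α : Fin 3 → F)
      = l (∑ α : PA F 3, cword t α • (α : Fin 3 → F)) := by
    rw [map_sum]
    simp [map_smul, smul_eq_mul]
  rw [this, cword_sum, map_zero]
end

section
/- Let δ, κ ∈ A both start with 1 with d(δ,κ) ≥ 3, let i be such that δ_i ≠ κ_i, and let P be the plane of PG(m-1,q) through π^{(i)}, δ, κ. Then the word c̄ = (δ̄ − e^{(δ)}) − (κ̄ − e^{(κ)}) is nonzero at exactly three points of P, namely π^{(i)}, δ, and κ. -/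
variable {F : Type*} [Field F] [Fintype F] [DecidableEq F] {m : ℕ}

lemma single_idx_eq {i j : Fin m} (h : (Pi.single i 1 : Fin m → F) = Pi.single j 1) :
    i = j := by
  by_contra hne
  have := congrFun h i
  rw [Pi.single_eq_same, Pi.single_eq_of_ne hne] at this
  exact one_ne_zero this

lemma bar_apply_single (γ : Fin m → F) (β : PA F m) (j : Fin m)
    (h : (β : Fin m → F) = Pi.single j 1) : bar γ β = γ j := by
  unfold bar
  rw [Finset.sum_eq_single j]
  · simp [h]
  · intro k _ hk
    rw [if_neg]
    intro hb
    exact hk (single_idx_eq (h ▸ hb : (Pi.single j 1 : Fin m → F) = Pi.single k 1)).symm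
  · simp

lemma bar_apply_zero (γ : Fin m → F) (β : PA F m)
    (h : ∀ j, (β : Fin m → F) ≠ Pi.single j 1) : bar γ β = 0 :=
  Finset.sum_eq_zero fun k _ => if_neg (h k)

theorem stmt19 [NeZero m] (δ κ : PA F m)
    (hδ : (δ : Fin m → F) 0 = 1) (hκ : (κ : Fin m → F) 0 = 1)
    (hd : 3 ≤ hammingDist (δ : Fin m → F) (κ : Fin m → F))
    (i : Fin m) (hi : (δ : Fin m → F) i ≠ (κ : Fin m → F) i) :
    {α : PA F m | (α : Fin m → F) ∈
        Submodule.span F {Pi.single i 1, (δ : Fin m → F), (κ : Fin m → F)} ∧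
      ((bar (δ : Fin m → F) - Pi.single δ 1)
        - (bar (κ : Fin m → F) - Pi.single κ 1) : PA F m → F) α ≠ 0}
    = {singleProj i, δ, κ} := by
  have hδκv : (δ : Fin m → F) ≠ (κ : Fin m → F) := by
    intro h; rw [h, hammingDist_self] at hd; omega
  have hδκ : δ ≠ κ := fun h => hδκv (by rw [h])
  have hi0 : i ≠ 0 := by rintro rfl; exact hi (hδ.trans hκ.symm)
  have hsδ : singleProj i ≠ δ := by
    intro h
    have h0 := congrFun (congrArg Subtype.val h) 0
    rw [hδ] at h0
    rw [show ((singleProj i : PA F m) : Fin m → F) = Pi.single i 1 from rfl,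
      Pi.single_eq_of_ne (Ne.symm hi0)] at h0
    exact zero_ne_one h0
  have hsκ : singleProj i ≠ κ := by
    intro h
    have h0 := congrFun (congrArg Subtype.val h) 0
    rw [hκ] at h0
    rw [show ((singleProj i : PA F m) : Fin m → F) = Pi.single i 1 from rfl,
      Pi.single_eq_of_ne (Ne.symm hi0)] at h0
    exact zero_ne_one h0
  have key : ∀ j : Fin m, (δ : Fin m → F) j ≠ (κ : Fin m → F) j →
      (Pi.single j 1 : Fin m → F) ∈
        Submodule.span F {Pi.single i 1, (δ : Fin m → F), (κ : Fin m → F)} → j = i := by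
    intro j hjδκ hmem
    by_contra hji
    have hj0 : j ≠ 0 := by rintro rfl; exact hjδκ (hδ.trans hκ.symm)
    rw [Submodule.mem_span_insert] at hmem
    obtain ⟨a, z, hz, hzeq⟩ := hmem
    rw [Submodule.mem_span_pair] at hz
    obtain ⟨b, c, hbc⟩ := hz
    rw [← hbc] at hzeq
    have h0 := congrFun hzeq 0
    simp only [Pi.add_apply, Pi.smul_apply, smul_eq_mul, Pi.single_eq_of_ne (Ne.symm hj0),
      Pi.single_eq_of_ne (Ne.symm hi0), hδ, hκ, mul_zero, mul_one, zero_add] at h0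
    -- h0 : 0 = 0 + (b + c)
    have hcb : c = -b := by linear_combination -h0
    by_cases hb : b = 0
    · subst hb
      rw [hcb] at hzeq
      have hj := congrFun hzeq j
      simp only [Pi.add_apply, Pi.smul_apply, smul_eq_mul, Pi.single_eq_same,
        Pi.single_eq_of_ne (fun h : j = i => hji h), neg_zero, zero_smul] at hj
      simp at hj
    · have hsupp : ∀ k, k ≠ i → k ≠ j → (δ : Fin m → F) k = (κ : Fin m → F) k := by
        intro k hki hkj
        have hk := congrFun hzeq k
        simp only [Pi.add_apply, Pi.smul_apply, smul_eq_mul, Pi.single_eq_of_ne hki,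
          Pi.single_eq_of_ne hkj, mul_zero, hcb] at hk
        have : b * ((δ : Fin m → F) k - (κ : Fin m → F) k) = 0 := by linear_combination -hk
        rcases mul_eq_zero.mp this with h | h
        · exact absurd h hb
        · linear_combination h
      have hle : hammingDist (δ : Fin m → F) (κ : Fin m → F) ≤ 2 := by
        have hsub : ({k | (δ : Fin m → F) k ≠ (κ : Fin m → F) k} : Finset (Fin m))
            ⊆ {i, j} := by
          intro k hk
          simp only [Finset.mem_filter, Finset.mem_univ, true_and] at hk
          simp only [Finset.mem_insert, Finset.mem_singleton]
          by_contra h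
          push_neg at h
          exact hk (hsupp k h.1 h.2)
        calc hammingDist (δ : Fin m → F) (κ : Fin m → F)
            ≤ ({i, j} : Finset (Fin m)).card := Finset.card_le_card hsub
          _ ≤ 2 := Finset.card_insert_le _ _ |>.trans (by simp)
      omega
  ext α
  simp only [Set.mem_setOf_eq, Set.mem_insert_iff, Set.mem_singleton_iff]
  constructor
  · rintro ⟨hspan, hne⟩
    by_cases hαδ : α = δ
    · exact Or.inr (Or.inl hαδ)
    by_cases hακ : α = κ
    · exact Or.inr (Or.inr hακ)
    left
    have h1 : (Pi.single δ 1 : PA F m → F) α = 0 := Pi.single_eq_of_ne hαδ 1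
    have h2 : (Pi.single κ 1 : PA F m → F) α = 0 := Pi.single_eq_of_ne hακ 1
    simp only [Pi.sub_apply, h1, h2, sub_zero] at hne
    by_cases hs : ∃ j, (α : Fin m → F) = Pi.single j 1
    · obtain ⟨j, hj⟩ := hs
      rw [bar_apply_single _ _ j hj, bar_apply_single _ _ j hj] at hne
      have hjne : (δ : Fin m → F) j ≠ (κ : Fin m → F) j := sub_ne_zero.mp hne
      have hji : j = i := key j hjne (hj ▸ hspan)
      exact Subtype.ext (by rw [hj, hji]; rfl)
    · push_neg at hs
      rw [bar_apply_zero _ _ hs, bar_apply_zero _ _ hs, sub_self] at hne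
      exact absurd rfl hne
  · have barsub : ∀ β : PA F m, (β : Fin m → F) 0 = 1 →
        bar (δ : Fin m → F) β = bar (κ : Fin m → F) β := by
      intro β hβ
      by_cases hs : ∃ j, (β : Fin m → F) = Pi.single j 1
      · obtain ⟨j, hj⟩ := hs
        have hj0 : j = 0 := by
          by_contra h
          have := congrFun hj 0
          rw [hβ, Pi.single_eq_of_ne (Ne.symm h)] at this
          exact one_ne_zero this
        rw [bar_apply_single _ _ j hj, bar_apply_single _ _ j hj, hj0, hδ, hκ]
      · push_neg at hs
        rw [bar_apply_zero _ _ hs, bar_apply_zero _ _ hs]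
    rintro (h | h | h) <;> rw [h]
    · refine ⟨Submodule.subset_span (by left; rfl), ?_⟩
      simp only [Pi.sub_apply,
        bar_apply_single (δ : Fin m → F) (singleProj i) i rfl,
        bar_apply_single (κ : Fin m → F) (singleProj i) i rfl,
        Pi.single_eq_of_ne hsδ, Pi.single_eq_of_ne hsκ, sub_zero]
      exact sub_ne_zero.mpr hi
    · refine ⟨Submodule.subset_span (by right; left; rfl), ?_⟩
      have e1 := barsub δ hδ
      simp only [Pi.sub_apply, Pi.single_eq_same, Pi.single_eq_of_ne hδκ, sub_zero]
      intro hc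
      exact one_ne_zero (α := F) (by linear_combination e1 - hc)
    · refine ⟨Submodule.subset_span (by right; right; rfl), ?_⟩
      have e1 := barsub κ hκ
      simp only [Pi.sub_apply, Pi.single_eq_same, Pi.single_eq_of_ne (Ne.symm hδκ),
        sub_zero]
      intro hc
      exact one_ne_zero (α := F) (by linear_combination hc - e1)
end
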